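/- Let \gamma_{top}(\kappa) := (6\kappa-5)e^{20\kappa} + 8(4\kappa^3-2\kappa-1)e^{18\kappa} + (32\kappa^3-48\kappa^2+2\kappa+23)e^{16\kappa} + 16(20\kappa^3-8\kappa^2+15\kappa+1)e^{14\kappa} + 4(232\kappa^3-116\kappa^2-2\kappa-11)e^{12\kappa} - 64\kappa(23\kappa^2+7)e^{10\kappa} + 4(232\kappa^3+116\kappa^2-2\kappa+11)e^{8\kappa} + 16(20\kappa^3+8\kappa^2+15\kappa-1)e^{6\kappa} + (32\kappa^3+48\kappa^2+2\kappa-23)e^{4\kappa} + 8(4\kappa^3-2\kappa+1)e^{2\kappa} + 6\kappa + 5. Then \gamma_{top}(\kappa) > 0 for all \kappa \geq 2. -/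
import Mathlib


noncomputable def gammaTop : ℝ → ℝ := fun κ =>
  (6*κ - 5) * Real.exp (20*κ) + 8*(4*κ^3 - 2*κ - 1) * Real.exp (18*κ)
    + (32*κ^3 - 48*κ^2 + 2*κ + 23) * Real.exp (16*κ)
    + 16*(20*κ^3 - 8*κ^2 + 15*κ + 1) * Real.exp (14*κ)
    + 4*(232*κ^3 - 116*κ^2 - 2*κ - 11) * Real.exp (12*κ)
    - 64*κ*(23*κ^2 + 7) * Real.exp (10*κ)
    + 4*(232*κ^3 + 116*κ^2 - 2*κ + 11) * Real.exp (8*κ)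
    + 16*(20*κ^3 + 8*κ^2 + 15*κ - 1) * Real.exp (6*κ)
    + (32*κ^3 + 48*κ^2 + 2*κ - 23) * Real.exp (4*κ)
    + 8*(4*κ^3 - 2*κ + 1) * Real.exp (2*κ) + 6*κ + 5

theorem gammaTop_pos_of_two_le : ∀ κ : ℝ, 2 ≤ κ → 0 < gammaTop κ := by
  intro κ hκ
  have hκ0 : (0:ℝ) < κ := by linarith
  have h16 : (65536:ℝ) ≤ Real.exp 16 := by
    have h2 : (2:ℝ) ≤ Real.exp 1 := by
      have := Real.add_one_le_exp (1:ℝ); linarith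
    calc (65536:ℝ) = 2^(16:ℕ) := by norm_num
      _ ≤ (Real.exp 1)^(16:ℕ) := pow_le_pow_left₀ (by norm_num) h2 16
      _ = Real.exp (16:ℕ) := by
          rw [← Real.exp_nat_mul]; norm_num
      _ = Real.exp 16 := by norm_num
  have h8κ : (65536:ℝ) ≤ Real.exp (8*κ) :=
    h16.trans (Real.exp_le_exp.2 (by linarith))
  have key : 64*κ*(23*κ^2+7) * Real.exp (10*κ) < 8*(4*κ^3-2*κ-1) * Real.exp (18*κ) := by
    have hsplit : Real.exp (18*κ) = Real.exp (8*κ) * Real.exp (10*κ) := by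
      rw [← Real.exp_add]; ring_nf
    rw [hsplit, ← mul_assoc]
    have h10 : 0 < Real.exp (10*κ) := Real.exp_pos _
    have hc : 27*κ^3 ≤ 8*(4*κ^3-2*κ-1) := by nlinarith [sq_nonneg (κ-2), mul_nonneg (sq_nonneg (κ-2)) hκ0.le]
    have hstep : 64*κ*(23*κ^2+7) < 8*(4*κ^3-2*κ-1) * Real.exp (8*κ) := by
      have h1 : 64*κ*(23*κ^2+7) ≤ 1584*κ^3 := by nlinarith
      have h2 : 27*κ^3 * 65536 ≤ 8*(4*κ^3-2*κ-1) * Real.exp (8*κ) := by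
        have hp : (0:ℝ) < 27*κ^3 := by positivity
        nlinarith [mul_le_mul hc h8κ (by norm_num) (by nlinarith)]
      nlinarith
    exact mul_lt_mul_of_pos_right hstep h10
  have n1 : 0 ≤ (6*κ - 5) * Real.exp (20*κ) :=
    mul_nonneg (by linarith) (Real.exp_pos _).le
  have n2 : 0 ≤ (32*κ^3 - 48*κ^2 + 2*κ + 23) * Real.exp (16*κ) :=
    mul_nonneg (by nlinarith) (Real.exp_pos _).le
  have n3 : 0 ≤ 16*(20*κ^3 - 8*κ^2 + 15*κ + 1) * Real.exp (14*κ) :=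
    mul_nonneg (by nlinarith) (Real.exp_pos _).le
  have n4 : 0 ≤ 4*(232*κ^3 - 116*κ^2 - 2*κ - 11) * Real.exp (12*κ) :=
    mul_nonneg (by nlinarith) (Real.exp_pos _).le
  have n5 : 0 ≤ 4*(232*κ^3 + 116*κ^2 - 2*κ + 11) * Real.exp (8*κ) :=
    mul_nonneg (by nlinarith) (Real.exp_pos _).le
  have n6 : 0 ≤ 16*(20*κ^3 + 8*κ^2 + 15*κ - 1) * Real.exp (6*κ) :=
    mul_nonneg (by nlinarith) (Real.exp_pos _).le
  have n7 : 0 ≤ (32*κ^3 + 48*κ^2 + 2*κ - 23) * Real.exp (4*κ) :=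
    mul_nonneg (by nlinarith) (Real.exp_pos _).le
  have n8 : 0 ≤ 8*(4*κ^3 - 2*κ + 1) * Real.exp (2*κ) :=
    mul_nonneg (by nlinarith) (Real.exp_pos _).le
  unfold gammaTop
  linarith
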